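/- (Theorem 3, structural form.) Let q ≥ 1, m, n, p be natural numbers. For each i ∈ Fin q let Aᵢ be an m×n real matrix, and let B be an m×p real matrix. Define the real matrix M with row index type Fin q × Fin m and column index type (Fin q × Fin n) ⊕ Fin p by M((i,r), inl(j,c)) = Aᵢ(r,c) if i = j and 0 otherwise, and M((i,r), inr c) = B(r,c). Suppose there exists j ∈ Fin q such that (i) the m×(n+p) horizontal concatenation [Aⱼ B] has full column rank (rank n + p), and (ii) Aᵢ has full column rank (rank n) for every i ≠ j. Then M has full column rank (rank(M) = q·n + p). -/

import Mathlib

open Matrix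

/-
If `M v = 0`, then block row `j` says that `[Aⱼ B]` kills the part of `v` seen by that row,
so the shared coordinates (those of `B`) vanish together with the `j`-th block. Each
remaining block row then reduces to `Aᵢ vᵢ = 0`, hence `vᵢ = 0`. So `M` has trivial kernel.
-/

namespace Matrix

variable {K : Type*} [Field K] {ι m n p : Type*}

theorem rank_eq_card_width_iff [Fintype m] [Fintype n] (M : Matrix m n K) :
    M.rank = Fintype.card n ↔ ∀ v, M *ᵥ v = 0 → v = 0 := by
  have hdim := M.mulVecLin.finrank_range_add_finrank_ker
  rw [Module.finrank_fintype_fun_eq_card] at hdim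
  rw [← ker_mulVecLin_eq_bot_iff, rank, ← Submodule.finrank_eq_zero]
  omega

/-- The paper's `F̄′`. Mathlib's `blockDiagonal` indexes rows as (row, block), hence the swaps. -/
def blockDiagonalFromCols [DecidableEq ι] (A : ι → Matrix m n K) (B : Matrix m p K) :
    Matrix (ι × m) ((ι × n) ⊕ p) K :=
  fromCols ((blockDiagonal A).submatrix Prod.swap Prod.swap) (B.submatrix Prod.snd id)

variable [Fintype ι] [DecidableEq ι] [Fintype n] [Fintype p]

theorem blockDiagonalFromCols_mulVec_apply (A : ι → Matrix m n K) (B : Matrix m p K)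
    (v : (ι × n) ⊕ p → K) (i : ι) (r : m) :
    (blockDiagonalFromCols A B *ᵥ v) (i, r) =
      (fromCols (A i) B *ᵥ (v ∘ Sum.map (Prod.mk i) id)) r := by
  simp [blockDiagonalFromCols, mulVec, dotProduct, Fintype.sum_prod_type, Fintype.sum_sum_type,
    blockDiagonal_apply]

theorem eq_zero_of_blockDiagonalFromCols_mulVec_eq_zero {A : ι → Matrix m n K}
    {B : Matrix m p K} {j : ι} (hj : ∀ z, fromCols (A j) B *ᵥ z = 0 → z = 0)
    (hA : ∀ i ≠ j, ∀ z, A i *ᵥ z = 0 → z = 0) {v : (ι × n) ⊕ p → K}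
    (hv : blockDiagonalFromCols A B *ᵥ v = 0) : v = 0 := by
  have hrow (i : ι) : fromCols (A i) B *ᵥ (v ∘ Sum.map (Prod.mk i) id) = 0 := by
    ext r
    rw [← blockDiagonalFromCols_mulVec_apply, hv, Pi.zero_apply, Pi.zero_apply]
  have hblock_j := hj _ (hrow j)
  have hshared : v ∘ Sum.inr = 0 := funext fun c => congrFun hblock_j (Sum.inr c)
  have hblock (i : ι) : (fun c => v (Sum.inl (i, c))) = 0 := by
    by_cases hij : i = j
    · subst hij
      exact funext fun c => congrFun hblock_j (Sum.inl c)
    · have hsplit : v ∘ Sum.map (Prod.mk i) id = Sum.elim (fun c => v (Sum.inl (i, c))) 0 := by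
        ext (c | c)
        · rfl
        · exact congrFun hshared c
      refine hA i hij _ ?_
      simpa only [hsplit, fromCols_mulVec_sumElim, mulVec_zero, add_zero] using hrow i
  ext (⟨i, c⟩ | c)
  · exact congrFun (hblock i) c
  · exact congrFun hshared c

variable [Fintype m]

theorem rank_blockDiagonalFromCols {A : ι → Matrix m n K} {B : Matrix m p K} {j : ι}
    (hj : (fromCols (A j) B).rank = Fintype.card n + Fintype.card p)
    (hA : ∀ i ≠ j, (A i).rank = Fintype.card n) :
    (blockDiagonalFromCols A B).rank = Fintype.card ι * Fintype.card n + Fintype.card p := by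
  have hcard : Fintype.card ((ι × n) ⊕ p) = Fintype.card ι * Fintype.card n + Fintype.card p := by
    simp
  rw [← hcard, rank_eq_card_width_iff]
  refine fun v => eq_zero_of_blockDiagonalFromCols_mulVec_eq_zero (j := j) ?_ ?_
  · exact (rank_eq_card_width_iff _).mp (by rw [hj, Fintype.card_sum])
  · exact fun i hij => (rank_eq_card_width_iff _).mp (hA i hij)

end Matrix

theorem full_column_rank_of_blocks
    (q m n p : ℕ)
    (A : Fin q → Matrix (Fin m) (Fin n) ℝ)
    (B : Matrix (Fin m) (Fin p) ℝ)
    (M : Matrix (Fin q × Fin m) ((Fin q × Fin n) ⊕ Fin p) ℝ)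
    (hM : ∀ row col, M row col =
      match row, col with
      | (i, r), Sum.inl (j, c) => if i = j then A i r c else 0
      | (_, r), Sum.inr c => B r c)
    (j : Fin q)
    (hj : (Matrix.fromCols (A j) B).rank = n + p)
    (hAi : ∀ i : Fin q, i ≠ j → (A i).rank = n) :
    M.rank = q * n + p := by
  have hM_eq : M = blockDiagonalFromCols A B := by
    ext ⟨i, r⟩ (⟨k, c⟩ | c) <;>
      simp [hM, blockDiagonalFromCols, blockDiagonal_apply]
  rw [hM_eq]
  simpa using rank_blockDiagonalFromCols (A := A) (B := B) (j := j)
    (by simpa using hj) (by simpa using hAi)
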